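/- With definitions as above, for all n ≥ 0: Σ_{j=0}^n C(n,j) · 𝔅_j^{(k)} · 𝔅𝔇_{n-j,a}^{[k,m-1]}(γ,η;λ) = Σ_{j=0}^n C(n,j) · B_j · 𝔅𝔇_{n-j,a}^{[m-1]}(γ,η;λ), where 𝔅_j^{(k)} are the poly-Bernoulli numbers (generating function Li_k(1-e^{-x})/(e^x-1)), B_j are the classical Bernoulli numbers (generating function x/(e^x-1)), 𝔅𝔇_{n,a}^{[k,m-1]}(γ,η;λ) are the generalized Apostol-Bernoulli poly-Daehee polynomials, and 𝔅𝔇_{n,a}^{[m-1]}(γ,η;λ) are defined by the generating function (1+x)^γ · (log(1+x)/x) · e^{ηx} · (x^m/(λe^x - Σ_{l=0}^{m-1} x^l/l!))^a. -/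

import Mathlib

/-! Multiplying either side by `(e^x - 1)(λe^x - Σ_{l<m} x^l/l!)^a` turns both products of
generating functions into `(1+x)^γ log(1+x) x^{ma} e^{ηx}`; since this factor is a nonzero
element of the integral domain `F⟦X⟧`, the two products agree, and the identity compares their
coefficients. -/

open PowerSeries Finset

noncomputable section

variable (F : Type*) [Field F] [CharZero F]

/-- Exponential generating function `Σ c n * x^n / n!`. -/
def egf (c : ℕ → F) : PowerSeries F := PowerSeries.mk fun n => c n / n.factorial

/-- `log(1+x)` as a formal power series. -/
def logOnePlus : PowerSeries F := PowerSeries.mk fun n => if n = 0 then 0 else (-1) ^ (n + 1) / n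

/-- `e^{-x}` as a formal power series. -/
def expNeg : PowerSeries F := PowerSeries.mk fun n => (-1) ^ n / n.factorial

/-- `Li_k(1 - e^{-x})`: since `(1-e^{-x})^m` has order `≥ m`, the `n`-th coefficient of the
composition is the finite sum `Σ_{m=1}^{n} m^{-k} * coeff n ((1-e^{-x})^m)`. -/
def liComp (k : ℤ) : PowerSeries F :=
  PowerSeries.mk fun n => ∑ m ∈ Finset.range (n + 1),
    (if m = 0 then 0 else ((m : F) ^ k)⁻¹) * PowerSeries.coeff n ((1 - expNeg F) ^ m)

/-- `(1+x)^γ = Σ_j (γ)_j x^j/j!` with `(γ)_j = γ(γ-1)⋯(γ-j+1)` the falling factorial. -/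
def onePlusPow (γ : F) : PowerSeries F := egf F fun j => ∏ i ∈ Finset.range j, (γ - i)

/-- Truncated exponential `Σ_{l<m} x^l/l!`. -/
def truncExp (m : ℕ) : PowerSeries F :=
  PowerSeries.mk fun l => if l < m then ((l.factorial : F))⁻¹ else 0

/-- `λ e^x - Σ_{l<m} x^l/l!`, the denominator in the generalized Apostol-Bernoulli
generating function. -/
def bden (lam : F) (m : ℕ) : PowerSeries F := PowerSeries.C lam * PowerSeries.exp F - truncExp F m

variable {F}

theorem egf_injective : Function.Injective (egf F) := by
  intro c d h
  funext n
  have hn := congrArg (coeff n) h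
  simp only [egf, coeff_mk] at hn
  exact (div_left_inj' (Nat.cast_ne_zero.mpr n.factorial_ne_zero)).mp hn

theorem egf_mul (c d : ℕ → F) :
    egf F c * egf F d =
      egf F fun n => ∑ j ∈ range (n + 1), (n.choose j : F) * c j * d (n - j) := by
  ext n
  simp only [egf, coeff_mul, coeff_mk, Nat.sum_antidiagonal_eq_sum_range_succ_mk, sum_div]
  refine sum_congr rfl fun j hj => ?_
  have hjn : j ≤ n := Nat.lt_succ_iff.mp (mem_range.mp hj)
  have hj! : (j.factorial : F) ≠ 0 := Nat.cast_ne_zero.mpr j.factorial_ne_zero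
  have hnj! : ((n - j).factorial : F) ≠ 0 := Nat.cast_ne_zero.mpr (n - j).factorial_ne_zero
  have hn! : (n.factorial : F) ≠ 0 := Nat.cast_ne_zero.mpr n.factorial_ne_zero
  rw [Nat.cast_choose F hjn]
  field_simp

theorem exp_sub_one_ne_zero : exp F - 1 ≠ 0 := by
  intro h
  simpa [coeff_exp] using congrArg (coeff 1) h

theorem bden_ne_zero (lam : F) {m : ℕ} (hm : 1 ≤ m) : bden F lam m ≠ 0 := by
  intro h
  by_cases hlam : lam = 0
  · have h0 := congrArg (coeff 0) h
    simp [bden, truncExp, hlam, show 0 < m from hm] at h0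
  · have hm' := congrArg (coeff m) h
    simp [bden, truncExp, coeff_exp, hlam, Nat.factorial_ne_zero] at hm'

theorem gabpdp_polyBernoulli_symmetry_general (k : ℤ) (m a : ℕ) (hm : 1 ≤ m)
    (γ η lam : F) (Bk B BD BDm : ℕ → F)
    (hBk : (PowerSeries.exp F - 1) * egf F Bk = liComp F k)
    (hB : (PowerSeries.exp F - 1) * egf F B = PowerSeries.X)
    (hBD : liComp F k * bden F lam m ^ a * egf F BD =
      onePlusPow F γ * logOnePlus F * PowerSeries.X ^ (m * a) *
        PowerSeries.rescale η (PowerSeries.exp F))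
    (hBDm : PowerSeries.X * bden F lam m ^ a * egf F BDm =
      onePlusPow F γ * logOnePlus F * PowerSeries.X ^ (m * a) *
        PowerSeries.rescale η (PowerSeries.exp F)) :
    ∀ n : ℕ, ∑ j ∈ Finset.range (n + 1), (n.choose j : F) * Bk j * BD (n - j) =
      ∑ j ∈ Finset.range (n + 1), (n.choose j : F) * B j * BDm (n - j) := by
  have hproducts : egf F Bk * egf F BD = egf F B * egf F BDm := by
    refine mul_left_cancel₀
      (mul_ne_zero exp_sub_one_ne_zero (pow_ne_zero a (bden_ne_zero lam hm))) ?_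
    calc (exp F - 1) * bden F lam m ^ a * (egf F Bk * egf F BD)
        = liComp F k * bden F lam m ^ a * egf F BD := by rw [← hBk]; ring
      _ = X * bden F lam m ^ a * egf F BDm := by rw [hBD, hBDm]
      _ = (exp F - 1) * bden F lam m ^ a * (egf F B * egf F BDm) := by rw [← hB]; ring
  rw [egf_mul, egf_mul] at hproducts
  exact congrFun (egf_injective hproducts)

/-- `Σ_j C(n,j) 𝔅_j^{(k)} 𝔅𝔇_{n-j,a}^{[k,m-1]}(γ,η;λ) = Σ_j C(n,j) B_j 𝔅𝔇_{n-j,a}^{[m-1]}(γ,η;λ)`,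
where `𝔅_j^{(k)}` are the poly-Bernoulli numbers, `B_j` the classical Bernoulli numbers,
and `𝔅𝔇^{[m-1]}` the `k`-free version (with `log(1+x)/x` in place of `log(1+x)/Li_k(1-e^{-x})`). -/
theorem gabpdp_polyBernoulli_symmetry (k : ℤ) (m a : ℕ) (hm : 1 ≤ m) (ha : 1 ≤ a)
    (γ η lam : F) (Bk B BD BDm : ℕ → F)
    (hBk : (PowerSeries.exp F - 1) * egf F Bk = liComp F k)
    (hB : (PowerSeries.exp F - 1) * egf F B = PowerSeries.X)
    (hBD : liComp F k * bden F lam m ^ a * egf F BD =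
      onePlusPow F γ * logOnePlus F * PowerSeries.X ^ (m * a) *
        PowerSeries.rescale η (PowerSeries.exp F))
    (hBDm : PowerSeries.X * bden F lam m ^ a * egf F BDm =
      onePlusPow F γ * logOnePlus F * PowerSeries.X ^ (m * a) *
        PowerSeries.rescale η (PowerSeries.exp F)) :
    ∀ n : ℕ, ∑ j ∈ Finset.range (n + 1), (n.choose j : F) * Bk j * BD (n - j) =
      ∑ j ∈ Finset.range (n + 1), (n.choose j : F) * B j * BDm (n - j) :=
  gabpdp_polyBernoulli_symmetry_general k m a hm γ η lam Bk B BD BDm hBk hB hBD hBDm
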